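/- arXiv:2410.14783 — 2 statements merged into one kernel-verified Lean document; each statement's English description precedes it below -/
import Mathlib

section
/- Let d, d', r be positive integers with r ≤ min(d, d'), let ε > 0, and set N₁ = ⌊(1 + 4/ε)^{d·r}⌋ and N₂ = ⌊(1 + 4/ε)^{d'·r}⌋. Then there exist matrices U_1, …, U_{N₁} ∈ ℝ^{d×r} and V_1, …, V_{N₂} ∈ ℝ^{d'×r} with ‖U_j‖₂ ≤ 1 and ‖V_{j'}‖₂ ≤ 1 for all j, j', such that for every M ∈ ℝ^{d×d'} with ‖M‖₂ ≤ 1 and rank(M) ≤ r there exist indices j ≤ N₁ and j' ≤ N₂ with ‖M − U_j V_{j'}ᵀ‖₂ ≤ ε. (Lemma B.1(ii) of the paper: an ε-net for the set of low-rank matrices with bounded spectral norm.) -/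
/-!
Comparing volumes of disjoint balls shows that a `δ`-separated subset of the unit ball of an
`n`-dimensional normed space has at most `(1 + 2/δ)^n` points, so a maximal one is a `δ`-net of
that size. A matrix `M` with `‖M‖ ≤ 1` and `rank M ≤ r` factors as `M = U (Uᵀ M)`, where
`U : ℝʳ → ℝᵈ` is the adjoint of a linear isometry from the range of `M` into `ℝʳ`, so that `U` is
a contraction and `U Uᵀ` is the orthogonal projection onto that range. Approximating both factors
`A = U` and `B = Mᵀ U` within `ε/2` then gives
`‖A Bᵀ - A' B'ᵀ‖ ≤ ‖A - A'‖ ‖B‖ + ‖A'‖ ‖B - B'‖ ≤ ε`.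
-/

open scoped Matrix Matrix.Norms.L2Operator

open Metric MeasureTheory Module
open scoped ENNReal NNReal InnerProduct

section Packing

variable {E : Type*} [NormedAddCommGroup E] [NormedSpace ℝ E] [FiniteDimensional ℝ E]

theorem Finset.card_le_of_isSeparated_of_subset_closedBall {δ : ℝ≥0} (hδ : 0 < δ) {s : Finset E}
    (hs : (s : Set E) ⊆ closedBall 0 1) (hsep : IsSeparated δ (s : Set E)) :
    (s.card : ℝ) ≤ (1 + 2 / δ) ^ finrank ℝ E := by
  borelize E
  let μ : Measure E := Measure.addHaar
  have hδ₂ : (0 : ℝ) < δ / 2 := by positivity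
  have hdisj : (s : Set E).PairwiseDisjoint fun x ↦ ball x (δ / 2) := by
    intro x hx y hy hxy
    refine ball_disjoint_ball ?_
    have : (δ : ℝ≥0∞) < edist x y := hsep hx hy hxy
    rw [edist_nndist, ENNReal.coe_lt_coe, ← NNReal.coe_lt_coe, coe_nndist] at this
    linarith
  have hsub : (⋃ x ∈ s, ball x (δ / 2)) ⊆ ball (0 : E) (1 + δ / 2) :=
    Set.iUnion₂_subset fun x hx ↦ ball_subset_ball' <| by
      have : ‖x‖ ≤ 1 := by simpa using hs hx
      simp only [dist_zero_right]
      linarith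
  have hB0 : μ (ball 0 1) ≠ 0 := (measure_ball_pos μ 0 one_pos).ne'
  have hBtop : μ (ball 0 1) ≠ ⊤ := measure_ball_lt_top.ne
  have key : (s.card : ℝ≥0∞) * ENNReal.ofReal ((δ / 2) ^ finrank ℝ E) ≤
      ENNReal.ofReal ((1 + δ / 2) ^ finrank ℝ E) := by
    refine (ENNReal.mul_le_mul_iff_left hB0 hBtop).1 ?_
    calc (s.card : ℝ≥0∞) * ENNReal.ofReal ((δ / 2) ^ finrank ℝ E) * μ (ball 0 1)
        = ∑ x ∈ s, μ (ball x (δ / 2)) := by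
          simp only [μ, Measure.addHaar_ball_of_pos _ _ hδ₂, Finset.sum_const, nsmul_eq_mul,
            mul_assoc]
      _ = μ (⋃ x ∈ s, ball x (δ / 2)) :=
          (measure_biUnion_finset hdisj fun _ _ ↦ measurableSet_ball).symm
      _ ≤ μ (ball 0 (1 + δ / 2)) := measure_mono hsub
      _ = ENNReal.ofReal ((1 + δ / 2) ^ finrank ℝ E) * μ (ball 0 1) :=
          Measure.addHaar_ball_of_pos μ 0 (by positivity)
  rw [← ENNReal.ofReal_natCast, ← ENNReal.ofReal_mul (by positivity),
    ENNReal.ofReal_le_ofReal_iff (by positivity), ← le_div_iff₀ (by positivity), ← div_pow] at key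
  have hδ₀ : (δ : ℝ) ≠ 0 := by positivity
  rwa [show (1 + δ / 2) / (δ / 2) = 1 + 2 / (δ : ℝ) by field_simp; ring] at key

theorem packingNumber_closedBall_le {δ : ℝ≥0} (hδ : 0 < δ) :
    packingNumber δ (closedBall (0 : E) 1) ≤ ⌊(1 + 2 / δ) ^ finrank ℝ E⌋₊ := by
  refine iSup₂_le fun C hC ↦ iSup_le fun hsep ↦ ?_
  by_contra! h
  obtain ⟨t, htC, ht⟩ := Set.exists_subset_encard_eq (Order.add_one_le_of_lt h)
  have htfin : t.Finite := Set.finite_of_encard_eq_coe ht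
  have hcard := htfin.toFinset.card_le_of_isSeparated_of_subset_closedBall hδ
    (by simpa using htC.trans hC) (by simpa using hsep.subset htC)
  rw [htfin.encard_eq_coe_toFinset_card] at ht
  norm_cast at ht
  rw [ht, Nat.cast_add_one] at hcard
  exact (Nat.lt_floor_add_one _).not_ge (by exact_mod_cast hcard)

theorem Set.exists_subset_range_fin_of_encard_le {α : Type*} {s t : Set α} {N : ℕ}
    (hs : s.encard ≤ N) (hst : s ⊆ t) (ht : t.Nonempty) :
    ∃ f : Fin N → α, s ⊆ Set.range f ∧ Set.range f ⊆ t := by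
  classical
  obtain ⟨hfin, -⟩ := Set.encard_le_coe_iff.1 hs
  set u := hfin.toFinset
  have hu : u.card ≤ N := by rwa [hfin.encard_eq_coe_toFinset_card, Nat.cast_le] at hs
  refine ⟨fun j ↦ if h : (j : ℕ) < u.card then u.equivFin.symm ⟨j, h⟩ else ht.some, ?_, ?_⟩
  · intro x hx
    set i := u.equivFin ⟨x, hfin.mem_toFinset.2 hx⟩
    exact ⟨⟨i, i.2.trans_le hu⟩, by simp [i]⟩
  · rintro _ ⟨j, rfl⟩
    dsimp only
    split_ifs
    · exact hst (hfin.mem_toFinset.1 (Subtype.prop _))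
    · exact ht.some_mem

theorem exists_fin_net_closedBall {δ : ℝ} (hδ : 0 < δ) :
    ∃ U : Fin ⌊(1 + 2 / δ) ^ finrank ℝ E⌋₊ → E,
      (∀ j, ‖U j‖ ≤ 1) ∧ ∀ x, ‖x‖ ≤ 1 → ∃ j, ‖x - U j‖ ≤ δ := by
  lift δ to ℝ≥0 using hδ.le
  have hcov := (coveringNumber_le_packingNumber δ (closedBall (0 : E) 1)).trans
    (packingNumber_closedBall_le (mod_cast hδ))
  obtain ⟨C, hCA, -, hC, hCcard⟩ :=
    exists_set_encard_eq_coveringNumber (hcov.trans_lt (by simp)).ne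
  obtain ⟨U, hCU, hUA⟩ :=
    Set.exists_subset_range_fin_of_encard_le (hCcard ▸ hcov) hCA ⟨0, by simp⟩
  refine ⟨U, fun j ↦ by simpa using hUA ⟨j, rfl⟩, fun x hx ↦ ?_⟩
  obtain ⟨y, hyC, hxy⟩ := hC (by simpa using hx)
  obtain ⟨j, rfl⟩ := hCU hyC
  simp only [edist_nndist, nndist_eq_nnnorm, ENNReal.coe_le_coe] at hxy
  exact ⟨j, mod_cast hxy⟩

end Packing

section PartialIsometry

variable {𝕜 E F : Type*} [RCLike 𝕜] [NormedAddCommGroup E] [InnerProductSpace 𝕜 E]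
  [FiniteDimensional 𝕜 E] [NormedAddCommGroup F] [InnerProductSpace 𝕜 F] [FiniteDimensional 𝕜 F]

theorem exists_linearIsometry_of_finrank_le (h : finrank 𝕜 E ≤ finrank 𝕜 F) :
    Nonempty (E →ₗᵢ[𝕜] F) := by
  let bE := stdOrthonormalBasis 𝕜 E
  let bF := stdOrthonormalBasis 𝕜 F
  let f : E →ₗ[𝕜] F := bE.toBasis.constr 𝕜 fun i ↦ bF (Fin.castLE h i)
  have hf : f ∘ bE.toBasis = bF ∘ Fin.castLE h := by
    funext i
    simp [f]
  refine ⟨f.isometryOfOrthonormal (v := bE.toBasis)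
    (by simpa only [OrthonormalBasis.coe_toBasis] using bE.orthonormal) ?_⟩
  rw [hf]
  exact bF.orthonormal.comp _ (Fin.castLE_injective h)

open ContinuousLinearMap in
theorem Submodule.exists_norm_le_one_apply_adjoint_apply_eq (W : Submodule 𝕜 E)
    (h : finrank 𝕜 W ≤ finrank 𝕜 F) :
    ∃ T : F →ₗ[𝕜] E, ‖LinearMap.toContinuousLinearMap T‖ ≤ 1 ∧ ∀ x ∈ W, T (T.adjoint x) = x := by
  have := FiniteDimensional.complete 𝕜 E
  have := FiniteDimensional.complete 𝕜 F
  obtain ⟨ι⟩ := exists_linearIsometry_of_finrank_le h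
  refine ⟨W.subtypeL ∘L ι.toContinuousLinearMap†, ?_, fun x hx ↦ ?_⟩
  · calc _ ≤ ‖W.subtypeL‖ * ‖ι.toContinuousLinearMap†‖ := opNorm_comp_le _ _
      _ ≤ 1 * 1 := by
        gcongr
        · exact W.norm_subtypeL_le
        · rw [adjoint.norm_map]
          exact ι.norm_toContinuousLinearMap_le
      _ = 1 := one_mul 1
  · rw [adjoint_toLinearMap, adjoint_comp, adjoint_adjoint, W.adjoint_subtypeL]
    have hι : (ι.toContinuousLinearMap†) (ι ⟨x, hx⟩) = ⟨x, hx⟩ :=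
      congr($(ι.adjoint_comp_self) ⟨x, hx⟩)
    simp [W.orthogonalProjectionOnto_mem_subspace_eq_self ⟨x, hx⟩, hι]

end PartialIsometry

namespace Matrix

variable {m n κ : Type*} [Fintype m] [Fintype n] [Fintype κ]

theorem exists_norm_le_one_mul_transpose_mul_eq [DecidableEq m] [DecidableEq n] [DecidableEq κ]
    (M : Matrix m n ℝ) (h : M.rank ≤ Fintype.card κ) :
    ∃ U : Matrix m κ ℝ, ‖U‖ ≤ 1 ∧ U * Uᵀ * M = M := by
  let W := LinearMap.range (toEuclideanLin M)
  have hW : finrank ℝ W ≤ finrank ℝ (EuclideanSpace ℝ κ) := by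
    rw [finrank_euclideanSpace]
    exact (M.rank_eq_finrank_range_toLin (EuclideanSpace.basisFun m ℝ).toBasis
      (EuclideanSpace.basisFun n ℝ).toBasis).symm.trans_le h
  obtain ⟨T, hT, hTW⟩ := W.exists_norm_le_one_apply_adjoint_apply_eq hW
  refine ⟨toEuclideanLin.symm T, by simpa [l2_opNorm_def] using hT, ?_⟩
  apply toEuclideanLin.injective
  ext x : 1
  rw [← conjTranspose_eq_transpose_of_trivial]
  simp only [toLpLin_mul_same, toEuclideanLin_conjTranspose_eq_adjoint,
    LinearEquiv.apply_symm_apply, LinearMap.comp_apply]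
  exact hTW _ (LinearMap.mem_range_self _ x)

theorem l2_opNorm_transpose [DecidableEq m] [DecidableEq n] (A : Matrix m n ℝ) : ‖Aᵀ‖ = ‖A‖ := by
  rw [← conjTranspose_eq_transpose_of_trivial, l2_opNorm_conjTranspose]

theorem exists_mul_transpose_eq_of_rank_le [DecidableEq m] [DecidableEq n] [DecidableEq κ]
    (M : Matrix m n ℝ) (hM : ‖M‖ ≤ 1) (h : M.rank ≤ Fintype.card κ) :
    ∃ (A : Matrix m κ ℝ) (B : Matrix n κ ℝ), ‖A‖ ≤ 1 ∧ ‖B‖ ≤ 1 ∧ A * Bᵀ = M := by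
  obtain ⟨U, hU, hUM⟩ := M.exists_norm_le_one_mul_transpose_mul_eq h
  refine ⟨U, Mᵀ * U, hU, ?_, by rwa [transpose_mul, transpose_transpose, ← Matrix.mul_assoc]⟩
  calc ‖Mᵀ * U‖ ≤ ‖Mᵀ‖ * ‖U‖ := l2_opNorm_mul _ _
    _ ≤ 1 * 1 := by gcongr; rwa [l2_opNorm_transpose]
    _ = 1 := one_mul 1

theorem norm_mul_transpose_sub_mul_transpose_le [DecidableEq n] [DecidableEq κ]
    (A A' : Matrix m κ ℝ) (B B' : Matrix n κ ℝ) :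
    ‖A * Bᵀ - A' * B'ᵀ‖ ≤ ‖A - A'‖ * ‖B‖ + ‖A'‖ * ‖B - B'‖ := by
  have h : A * Bᵀ - A' * B'ᵀ = (A - A') * Bᵀ + A' * (B - B')ᵀ := by
    rw [transpose_sub, Matrix.sub_mul, Matrix.mul_sub]
    abel
  rw [h, ← l2_opNorm_transpose B, ← l2_opNorm_transpose (B - B')]
  exact (norm_add_le _ _).trans (add_le_add (l2_opNorm_mul _ _) (l2_opNorm_mul _ _))

end Matrix

theorem stmt_2_general (d d' r : ℕ) (ε : ℝ) (hε : 0 < ε) :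
    ∃ (U : Fin ⌊(1 + 4 / ε) ^ (d * r)⌋₊ → Matrix (Fin d) (Fin r) ℝ)
      (V : Fin ⌊(1 + 4 / ε) ^ (d' * r)⌋₊ → Matrix (Fin d') (Fin r) ℝ),
      (∀ j, ‖U j‖ ≤ 1) ∧ (∀ j', ‖V j'‖ ≤ 1) ∧
      ∀ M : Matrix (Fin d) (Fin d') ℝ, ‖M‖ ≤ 1 → M.rank ≤ r →
        ∃ j j', ‖M - U j * (V j')ᵀ‖ ≤ ε := by
  have hδ : 0 < ε / 2 := half_pos hε
  have hbase : 1 + 2 / (ε / 2) = 1 + 4 / ε := by field_simp; ring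
  have netU := exists_fin_net_closedBall (E := Matrix (Fin d) (Fin r) ℝ) hδ
  have netV := exists_fin_net_closedBall (E := Matrix (Fin d') (Fin r) ℝ) hδ
  rw [hbase, Module.finrank_matrix, Module.finrank_self, Fintype.card_fin, Fintype.card_fin,
    mul_one] at netU netV
  obtain ⟨U, hU, hUnet⟩ := netU
  obtain ⟨V, hV, hVnet⟩ := netV
  refine ⟨U, V, hU, hV, fun M hM hrank ↦ ?_⟩
  obtain ⟨A, B, hA, hB, rfl⟩ :=
    M.exists_mul_transpose_eq_of_rank_le (κ := Fin r) hM (by simpa using hrank)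
  obtain ⟨j, hj⟩ := hUnet A hA
  obtain ⟨j', hj'⟩ := hVnet B hB
  refine ⟨j, j', ?_⟩
  calc _ ≤ ‖A - U j‖ * ‖B‖ + ‖U j‖ * ‖B - V j'‖ :=
        Matrix.norm_mul_transpose_sub_mul_transpose_le _ _ _ _
    _ ≤ ε / 2 * 1 + 1 * (ε / 2) := by gcongr; exact hU j
    _ = ε := by ring

/-- **Lemma B.1(ii)**: an `ε`-net for the set of `d × d'` real matrices of rank at most `r`
and spectral norm at most `1`, consisting of products `U_j V_{j'}ᵀ` with
`‖U_j‖₂ ≤ 1`, `‖V_{j'}‖₂ ≤ 1`, of cardinalities `N₁ = ⌊(1+4/ε)^{d r}⌋` and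
`N₂ = ⌊(1+4/ε)^{d' r}⌋`.  Here `‖·‖` is the `ℓ²→ℓ²` operator (spectral) norm. -/
theorem stmt_2 (d d' r : ℕ) (hr : 1 ≤ r) (hrd : r ≤ min d d') (ε : ℝ) (hε : 0 < ε) :
    ∃ (U : Fin ⌊(1 + 4 / ε) ^ (d * r)⌋₊ → Matrix (Fin d) (Fin r) ℝ)
      (V : Fin ⌊(1 + 4 / ε) ^ (d' * r)⌋₊ → Matrix (Fin d') (Fin r) ℝ),
      (∀ j, ‖U j‖ ≤ 1) ∧ (∀ j', ‖V j'‖ ≤ 1) ∧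
      ∀ M : Matrix (Fin d) (Fin d') ℝ, ‖M‖ ≤ 1 → M.rank ≤ r →
        ∃ j j', ‖M - U j * (V j')ᵀ‖ ≤ ε :=
  stmt_2_general d d' r ε hε
end

section
/- Let m ≥ 8 be an integer and let Ω = {0,1}^m be the set of binary sequences of length m. Then there exists a subset {ω^{(0)}, ω^{(1)}, …, ω^{(N)}} of Ω of N + 1 distinct elements such that ω^{(0)} = (0, …, 0), the Hamming distance satisfies ρ_H(ω^{(i)}, ω^{(j)}) ≥ m/8 for all 0 ≤ i < j ≤ N, and N ≥ 2^{m/8}. (Lemma B.11 of the paper: the Varshamov–Gilbert bound.) -/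
/-!
Take a set `S ∋ 0` of binary words of maximal size among those with pairwise Hamming distance
at least `d = ⌈m/8⌉`. By maximality the Hamming balls of radius `d - 1` around `S` cover
`{0,1}^m`, so `2^m ≤ |S| · V` with `V = ∑_{i<d} C(m,i)`. Comparing with the expansion of
`(1 + 7)^m` gives `V · 7^(m+1-d) ≤ 8^m`, and `2^d · 4^m < 7^(m+1-d)` for `m ≥ 8`, whence
`|S| > 2^d`.
-/

open Finset

section Gilbert

variable {ι : Type*} [Fintype ι]

theorem exists_separated_covering [DecidableEq ι] {β : ι → Type*} [∀ i, Fintype (β i)]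
    [∀ i, DecidableEq (β i)] (x₀ : ∀ i, β i) {d : ℕ} (hd : 0 < d) :
    ∃ S : Finset (∀ i, β i), x₀ ∈ S ∧
      (S : Set (∀ i, β i)).Pairwise (fun x y => d ≤ hammingDist x y) ∧
      ∀ y, ∃ x ∈ S, hammingDist x y < d := by
  classical
  obtain ⟨S, hS, hmax⟩ := exists_max_image
    ({S | x₀ ∈ S ∧ (S : Set (∀ i, β i)).Pairwise (fun x y => d ≤ hammingDist x y)} :
      Finset (Finset (∀ i, β i)))
    card ⟨{x₀}, by simp⟩
  simp only [mem_filter, mem_univ, true_and] at hS hmax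
  refine ⟨S, hS.1, hS.2, fun y => ?_⟩
  by_contra! hfar
  have hyS : y ∉ S := fun hy => by simpa [hd.ne'] using hfar y hy
  have hsep : (insert y S : Set (∀ i, β i)).Pairwise (fun x y => d ≤ hammingDist x y) :=
    hS.2.insert_of_notMem hyS fun x hx => ⟨hammingDist_comm x y ▸ hfar x hx, hfar x hx⟩
  have := hmax (insert y S) ⟨mem_insert_of_mem hS.1, by simpa using hsep⟩
  rw [card_insert_of_notMem hyS] at this
  omega

theorem card_filter_card_lt_eq_sum_choose (d : ℕ) :
    #{A : Finset ι | #A < d} = ∑ i ∈ range d, (Fintype.card ι).choose i := by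
  rw [card_eq_sum_card_fiberwise (f := card) (t := range d) fun A hA => by simpa using hA]
  refine sum_congr rfl fun i hi => ?_
  rw [← card_univ, ← card_powersetCard]
  congr 1
  ext A
  simp only [mem_filter, mem_univ, true_and, mem_powersetCard_univ, and_iff_right_iff_imp]
  rintro rfl
  simpa using hi

theorem card_filter_hammingDist_lt_le [DecidableEq ι] (x : ι → Bool) (d : ℕ) :
    #{y | hammingDist x y < d} ≤ ∑ i ∈ range d, (Fintype.card ι).choose i := by
  rw [← card_filter_card_lt_eq_sum_choose]
  refine card_le_card_of_injOn (fun y => ({i | x i ≠ y i} : Finset ι))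
    (fun y hy => by simpa [hammingDist] using hy) ?_
  intro y _ y' _ h
  funext i
  have := congrArg (i ∈ ·) h
  simp only [mem_filter, mem_univ, true_and, eq_iff_iff] at this
  revert this
  cases x i <;> cases y i <;> cases y' i <;> simp

theorem two_pow_le_card_mul_sum_choose [DecidableEq ι] {S : Finset (ι → Bool)} {d : ℕ}
    (hS : ∀ y, ∃ x ∈ S, hammingDist x y < d) :
    2 ^ Fintype.card ι ≤ #S * ∑ i ∈ range d, (Fintype.card ι).choose i := by
  calc 2 ^ Fintype.card ι = #(S.biUnion fun x => {y | hammingDist x y < d}) := by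
        rw [eq_univ_of_forall fun y => mem_biUnion.2 <| by simpa using hS y]
        simp
    _ ≤ ∑ x ∈ S, #{y | hammingDist x y < d} := card_biUnion_le
    _ ≤ ∑ x ∈ S, ∑ i ∈ range d, (Fintype.card ι).choose i :=
        sum_le_sum fun x _ => card_filter_hammingDist_lt_le x d
    _ = _ := by rw [sum_const, smul_eq_mul]

end Gilbert

theorem sum_range_choose_mul_pow_le (n d : ℕ) {a : ℕ} (ha : 0 < a) :
    (∑ i ∈ range d, n.choose i) * a ^ (n + 1 - d) ≤ (1 + a) ^ n := by
  rw [add_pow, sum_mul]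
  calc ∑ i ∈ range d, n.choose i * a ^ (n + 1 - d)
      ≤ ∑ i ∈ range d, 1 ^ i * a ^ (n - i) * n.choose i := by
        refine sum_le_sum fun i hi => ?_
        rcases le_or_gt i n with hin | hni
        · rw [one_pow, one_mul, mul_comm]
          exact Nat.mul_le_mul_right _ (Nat.pow_le_pow_right ha (by have := mem_range.1 hi; omega))
        · simp [Nat.choose_eq_zero_of_lt hni]
    _ ≤ ∑ i ∈ range (n + 1), 1 ^ i * a ^ (n - i) * n.choose i :=
        sum_le_sum_of_ne_zero fun i _ hi => by
          rw [mem_range, Nat.lt_succ_iff]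
          by_contra! hni
          simp [Nat.choose_eq_zero_of_lt hni] at hi

-- Induction in steps of 8: the left side grows by `2^17`, the right side by `7^7`.
theorem two_pow_mul_four_pow_lt {m : ℕ} (hm : 8 ≤ m) :
    2 ^ ((m + 7) / 8) * 4 ^ m < 7 ^ (m + 1 - (m + 7) / 8) := by
  induction m using Nat.strong_induction_on with
  | _ m ih =>
    by_cases hsmall : m < 16
    · interval_cases m <;> norm_num
    obtain ⟨n, rfl⟩ : ∃ n, m = n + 8 := ⟨m - 8, by omega⟩
    rw [show (n + 8 + 7) / 8 = (n + 7) / 8 + 1 by omega,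
      show n + 8 + 1 - ((n + 7) / 8 + 1) = n + 1 - (n + 7) / 8 + 7 by omega]
    calc 2 ^ ((n + 7) / 8 + 1) * 4 ^ (n + 8) = 2 ^ 17 * (2 ^ ((n + 7) / 8) * 4 ^ n) := by ring
      _ < 2 ^ 17 * 7 ^ (n + 1 - (n + 7) / 8) := by gcongr; exact ih n (by omega) (by omega)
      _ ≤ 7 ^ 7 * 7 ^ (n + 1 - (n + 7) / 8) := Nat.mul_le_mul_right _ (by norm_num)
      _ = _ := by ring

theorem two_pow_mul_sum_choose_lt {m : ℕ} (hm : 8 ≤ m) :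
    2 ^ ((m + 7) / 8) * ∑ i ∈ range ((m + 7) / 8), m.choose i < 2 ^ m := by
  set d := (m + 7) / 8
  refine Nat.lt_of_mul_lt_mul_right (a := 7 ^ (m + 1 - d)) ?_
  calc 2 ^ d * (∑ i ∈ range d, m.choose i) * 7 ^ (m + 1 - d)
      ≤ 2 ^ d * 8 ^ m := by
        rw [mul_assoc]; gcongr; exact sum_range_choose_mul_pow_le m d (by norm_num)
    _ = 2 ^ d * 4 ^ m * 2 ^ m := by rw [show (8 : ℕ) = 4 * 2 by rfl, mul_pow]; ring
    _ < 7 ^ (m + 1 - d) * 2 ^ m := by gcongr; exact two_pow_mul_four_pow_lt hm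
    _ = _ := mul_comm _ _

theorem Finset.exists_injective_fin_zero_eq {α : Type*} {S : Finset α} {z : α} {N : ℕ}
    (hz : z ∈ S) (hS : #S = N + 1) :
    ∃ ω : Fin (N + 1) → α, Function.Injective ω ∧ ω 0 = z ∧ ∀ i, ω i ∈ S := by
  let e := (S.equivFinOfCardEq hS).trans (Equiv.swap (S.equivFinOfCardEq hS ⟨z, hz⟩) 0)
  refine ⟨fun i => e.symm i, Subtype.val_injective.comp e.symm.injective, ?_,
    fun i => (e.symm i).2⟩
  simp [e]

/-- **Lemma B.11** (Varshamov–Gilbert bound): for `m ≥ 8` there exist `N + 1` distinct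
binary sequences `ω^{(0)}, …, ω^{(N)} ∈ {0,1}^m` with `ω^{(0)} = (0, …, 0)`, pairwise
Hamming distance at least `m/8`, and `N ≥ 2^{m/8}`. -/
theorem stmt_16 (m : ℕ) (hm : 8 ≤ m) :
    ∃ (N : ℕ) (ω : Fin (N + 1) → Fin m → Bool),
      Function.Injective ω ∧
      ω 0 = (fun _ => false) ∧
      (∀ i j : Fin (N + 1), i ≠ j →
        (m : ℝ) / 8 ≤ (Finset.univ.filter fun k => ω i k ≠ ω j k).card) ∧
      (2 : ℝ) ^ ((m : ℝ) / 8) ≤ N := by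
  set d := (m + 7) / 8
  have hd : (m : ℝ) / 8 ≤ d := by
    rw [div_le_iff₀ (by norm_num)]; exact_mod_cast (by omega : m ≤ d * 8)
  obtain ⟨S, hzS, hsep, hcover⟩ := exists_separated_covering (fun _ : Fin m => false) (d := d)
    (by omega)
  have hcard : 2 ^ d < #S := by
    have := two_pow_le_card_mul_sum_choose hcover
    rw [Fintype.card_fin] at this
    exact Nat.lt_of_mul_lt_mul_right ((two_pow_mul_sum_choose_lt hm).trans_le this)
  obtain ⟨ω, hinj, hω0, hωS⟩ := exists_injective_fin_zero_eq (N := #S - 1) hzS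
    (Nat.sub_add_cancel (card_pos.2 ⟨_, hzS⟩)).symm
  refine ⟨#S - 1, ω, hinj, hω0, fun i j hij => ?_, ?_⟩
  · calc (m : ℝ) / 8 ≤ d := hd
      _ ≤ hammingDist (ω i) (ω j) := by
        exact_mod_cast hsep (hωS i) (hωS j) (hinj.ne hij)
  · calc (2 : ℝ) ^ ((m : ℝ) / 8) ≤ 2 ^ (d : ℝ) :=
          Real.rpow_le_rpow_of_exponent_le one_le_two hd
      _ = ((2 ^ d : ℕ) : ℝ) := by norm_cast
      _ ≤ (#S - 1 : ℕ) := Nat.cast_le.2 (Nat.le_sub_one_of_lt hcard)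
end
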